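/- Assume 0 < α ≤ 1 and let the regularizer be G_TV; set θ = (1−α)·C/α and, for each i ∈ [M], k̂_i = max{k ∈ [N] : d_{i j_k^i} − d_{i j_1^i} < θ}. Let γ'' ∈ ℝ^{M×N} be feasible with γ''_{i j_k^i} = 0 for all i ∈ [M] and all k > k̂_i. Define γ''' ∈ ℝ^{M×N} row-wise by: for 2 ≤ k ≤ N, γ'''_{i j_k^i} = 1/(MN) if 2 ≤ k ≤ k̂_i and γ''_{i j_k^i} > 1/(MN), and γ'''_{i j_k^i} = γ''_{i j_k^i} otherwise; and γ'''_{i j_1^i} = 1/M − Σ_{k=2}^{N} γ'''_{i j_k^i}. Then γ''' is feasible and L(γ''') ≤ L(γ''). -/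
import Mathlib


open Finset

/-- Second step of the proof of Theorem 3: capping at `1/(MN)` the overweight entries
(among positions `2 ≤ k ≤ k̂_i`) of a feasible transport `γ''` supported within the
threshold yields a feasible transport `γ'''` with no larger `G_TV`-regularized objective. -/
theorem stmt_9 (M N : ℕ) (hM : 1 ≤ M) (hN : 1 ≤ N)
    (d : Fin M → Fin N → ℝ) (hd : ∀ i j, 0 ≤ d i j)
    (C α : ℝ) (hC : 0 < C) (hα0 : 0 < α) (hα1 : α ≤ 1)
    (σ : Fin M → Equiv.Perm (Fin N))
    (hsort : ∀ i, Monotone fun k => d i (σ i k))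
    (D : Fin M → ℕ → ℝ) (hD : ∀ i (l : Fin N), D i (l : ℕ) = d i (σ i l))
    -- `k̂_i = max {k ∈ [N] : d_{i j_k^i} − d_{i j_1^i} < θ}` where `θ = (1-α)C/α`
    (khat : Fin M → ℕ)
    (hkhat1 : ∀ i, 1 ≤ khat i) (hkhat2 : ∀ i, khat i ≤ N)
    (hkhat3 : ∀ i, D i (khat i - 1) - D i 0 < (1 - α) * C / α)
    (hkhat4 : ∀ i k, 1 ≤ k → k ≤ N → D i (k - 1) - D i 0 < (1 - α) * C / α → k ≤ khat i)
    (L : (Fin M → Fin N → ℝ) → ℝ)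
    (hL : ∀ γ, L γ = (α / C) * (∑ i, ∑ j, γ i j * d i j)
      + (1 - α) * ((1 / 2) * ∑ i, ∑ j, |γ i j - 1 / ((M : ℝ) * N)|))
    -- `γ''` is feasible and vanishes at positions `k > k̂_i`
    (γ'' : Fin M → Fin N → ℝ)
    (hγ''1 : ∀ i j, 0 ≤ γ'' i j) (hγ''2 : ∀ i, ∑ j, γ'' i j = 1 / (M : ℝ))
    (hγ''3 : ∀ i (k : Fin N), khat i ≤ (k : ℕ) → γ'' i (σ i k) = 0)
    -- `γ'''` caps overweight entries at `1/(MN)` and rebalances onto the first entry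
    (γ''' : Fin M → Fin N → ℝ)
    (hγ'''k : ∀ i (k : Fin N), (k : ℕ) ≠ 0 →
      γ''' i (σ i k) =
        if (k : ℕ) < khat i ∧ 1 / ((M : ℝ) * N) < γ'' i (σ i k) then 1 / ((M : ℝ) * N)
        else γ'' i (σ i k))
    (hγ'''0 : ∀ i, γ''' i (σ i ⟨0, by omega⟩) =
      1 / (M : ℝ) - ∑ k ∈ Finset.univ.filter (fun k : Fin N => (k : ℕ) ≠ 0), γ''' i (σ i k)) :
    ((∀ i j, 0 ≤ γ''' i j) ∧ (∀ i, ∑ j, γ''' i j = 1 / (M : ℝ))) ∧ L γ''' ≤ L γ'' := by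
  have hNpos : 0 < N := hN
  set u : ℝ := 1 / ((M : ℝ) * N) with hu
  have hu0 : 0 < u := by
    have h1 : (0:ℝ) < (M:ℝ) := by exact_mod_cast Nat.lt_of_lt_of_le Nat.zero_lt_one hM
    have h2 : (0:ℝ) < (N:ℝ) := by exact_mod_cast hNpos
    positivity
  set z : Fin N := ⟨0, hNpos⟩ with hz
  -- The capped set for row i
  set T : Fin M → Finset (Fin N) :=
    fun i => Finset.univ.filter (fun k : Fin N => (k : ℕ) ≠ 0 ∧ (k : ℕ) < khat i ∧ u < γ'' i (σ i k))
    with hT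
  set S : Fin M → ℝ := fun i => ∑ k ∈ T i, (γ'' i (σ i k) - u) with hS
  have hSnn : ∀ i, 0 ≤ S i := by
    intro i
    refine Finset.sum_nonneg fun k hk => ?_
    simp only [hT, Finset.mem_filter] at hk
    linarith [hk.2.2.2]
  -- value formula off zero
  have hb : ∀ i (k : Fin N), (k : ℕ) ≠ 0 →
      γ''' i (σ i k) = if k ∈ T i then u else γ'' i (σ i k) := by
    intro i k hk
    rw [hγ'''k i k hk]
    by_cases h : (k : ℕ) < khat i ∧ u < γ'' i (σ i k)
    · rw [if_pos h, if_pos (by simp [hT, hk, h.1, h.2])]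
    · rw [if_neg h, if_neg ?_]
      intro hmem
      simp only [hT, Finset.mem_filter] at hmem
      exact h ⟨hmem.2.2.1, hmem.2.2.2⟩
  have hTsub : ∀ i, T i ⊆ Finset.univ.filter (fun k : Fin N => (k : ℕ) ≠ 0) := by
    intro i k hk
    simp only [hT, Finset.mem_filter] at hk ⊢
    exact ⟨hk.1, hk.2.1⟩
  -- splitting a sum at z
  have hsplit : ∀ f : Fin N → ℝ,
      ∑ k, f k = f z + ∑ k ∈ Finset.univ.filter (fun k : Fin N => (k : ℕ) ≠ 0), f k := by
    intro f
    have hset : Finset.univ.filter (fun k : Fin N => (k : ℕ) ≠ 0) = Finset.univ.erase z := by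
      ext k
      simp [hz, Fin.ext_iff]
    rw [hset, Finset.add_sum_erase _ f (Finset.mem_univ z)]
  -- b z = a z + S i
  have hb0 : ∀ i, γ''' i (σ i z) = γ'' i (σ i z) + S i := by
    intro i
    have h0 : γ''' i (σ i z) =
        1 / (M : ℝ) - ∑ k ∈ Finset.univ.filter (fun k : Fin N => (k : ℕ) ≠ 0), γ''' i (σ i k) :=
      hγ'''0 i
    have hsum'' : ∑ k, γ'' i (σ i k) = 1 / (M : ℝ) := by
      rw [Equiv.sum_comp (σ i) (γ'' i)]; exact hγ''2 i
    rw [hsplit (fun k => γ'' i (σ i k))] at hsum''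
    have hdiff : ∑ k ∈ Finset.univ.filter (fun k : Fin N => (k : ℕ) ≠ 0),
        (γ'' i (σ i k) - γ''' i (σ i k)) = S i := by
      simp only [hS]
      refine (Finset.sum_subset (hTsub i) ?_).symm.trans ?_
      · intro k hk hkT
        simp only [Finset.mem_filter, Finset.mem_univ, true_and] at hk
        rw [hb i k hk, if_neg hkT]
        ring
      · refine Finset.sum_congr rfl fun k hk => ?_
        have hk0 : (k : ℕ) ≠ 0 := by
          simp only [hT, Finset.mem_filter] at hk; exact hk.2.1
        rw [hb i k hk0, if_pos hk]
    rw [Finset.sum_sub_distrib] at hdiff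
    rw [h0]
    linarith
  constructor
  · constructor
    · -- nonnegativity
      intro i j
      have key : ∀ k : Fin N, 0 ≤ γ''' i (σ i k) := by
        intro k
        by_cases hk : (k : ℕ) = 0
        · have : k = z := by simp [hz, Fin.ext_iff, hk]
          rw [this, hb0 i]
          have := hγ''1 i (σ i z)
          linarith [hSnn i]
        · rw [hb i k hk]
          split
          · exact le_of_lt hu0
          · exact hγ''1 i (σ i k)
      have := key ((σ i).symm j)
      rwa [Equiv.apply_symm_apply] at this
    · -- row sums
      intro i
      rw [← Equiv.sum_comp (σ i) (γ''' i), hsplit (fun k => γ''' i (σ i k)), hγ'''0 i]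
      ring
  · -- objective inequality
    have claimA : ∀ i, ∑ j, γ''' i j * d i j ≤ ∑ j, γ'' i j * d i j := by
      intro i
      rw [← Equiv.sum_comp (σ i) (fun j => γ''' i j * d i j),
          ← Equiv.sum_comp (σ i) (fun j => γ'' i j * d i j)]
      rw [hsplit (fun k => γ''' i (σ i k) * d i (σ i k)),
          hsplit (fun k => γ'' i (σ i k) * d i (σ i k))]
      have h1 : ∑ k ∈ Finset.univ.filter (fun k : Fin N => (k : ℕ) ≠ 0),
          (γ'' i (σ i k) * d i (σ i k) - γ''' i (σ i k) * d i (σ i k))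
          = ∑ k ∈ T i, (γ'' i (σ i k) - u) * d i (σ i k) := by
        refine (Finset.sum_subset (hTsub i) ?_).symm.trans ?_
        · intro k hk hkT
          simp only [Finset.mem_filter, Finset.mem_univ, true_and] at hk
          rw [hb i k hk, if_neg hkT]; ring
        · refine Finset.sum_congr rfl fun k hk => ?_
          have hk0 : (k : ℕ) ≠ 0 := by
            simp only [hT, Finset.mem_filter] at hk; exact hk.2.1
          rw [hb i k hk0, if_pos hk]; ring
      have h2 : (γ''' i (σ i z) - γ'' i (σ i z)) * d i (σ i z)
          = ∑ k ∈ T i, (γ'' i (σ i k) - u) * d i (σ i z) := by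
        rw [hb0 i]
        rw [show γ'' i (σ i z) + S i - γ'' i (σ i z) = S i by ring]
        simp only [hS]
        rw [Finset.sum_mul]
      have h3 : ∑ k ∈ T i, (γ'' i (σ i k) - u) * d i (σ i z)
          ≤ ∑ k ∈ T i, (γ'' i (σ i k) - u) * d i (σ i k) := by
        refine Finset.sum_le_sum fun k hk => ?_
        simp only [hT, Finset.mem_filter] at hk
        have hdz : d i (σ i z) ≤ d i (σ i k) := hsort i (Fin.le_def.mpr (Nat.zero_le _))
        have : 0 ≤ γ'' i (σ i k) - u := by linarith [hk.2.2.2]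
        exact mul_le_mul_of_nonneg_left hdz this
      rw [Finset.sum_sub_distrib] at h1
      have hSdef : S i = ∑ k ∈ T i, (γ'' i (σ i k) - u) := rfl
      linarith
    have claimB : ∀ i, ∑ j, |γ''' i j - u| ≤ ∑ j, |γ'' i j - u| := by
      intro i
      rw [← Equiv.sum_comp (σ i) (fun j => |γ''' i j - u|),
          ← Equiv.sum_comp (σ i) (fun j => |γ'' i j - u|)]
      rw [hsplit (fun k => |γ''' i (σ i k) - u|), hsplit (fun k => |γ'' i (σ i k) - u|)]
      have h1 : ∑ k ∈ Finset.univ.filter (fun k : Fin N => (k : ℕ) ≠ 0),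
          (|γ'' i (σ i k) - u| - |γ''' i (σ i k) - u|)
          = ∑ k ∈ T i, (γ'' i (σ i k) - u) := by
        refine (Finset.sum_subset (hTsub i) ?_).symm.trans ?_
        · intro k hk hkT
          simp only [Finset.mem_filter, Finset.mem_univ, true_and] at hk
          rw [hb i k hk, if_neg hkT]; ring
        · refine Finset.sum_congr rfl fun k hk => ?_
          have hk0 : (k : ℕ) ≠ 0 := by
            simp only [hT, Finset.mem_filter] at hk; exact hk.2.1
          have hku : u < γ'' i (σ i k) := by
            simp only [hT, Finset.mem_filter] at hk; exact hk.2.2.2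
          rw [hb i k hk0, if_pos hk, sub_self, abs_zero,
              abs_of_nonneg (by linarith : (0:ℝ) ≤ γ'' i (σ i k) - u)]
          ring
      have h2 : |γ''' i (σ i z) - u| ≤ |γ'' i (σ i z) - u| + S i := by
        rw [hb0 i]
        calc |γ'' i (σ i z) + S i - u| = |(γ'' i (σ i z) - u) + S i| := by ring_nf
          _ ≤ |γ'' i (σ i z) - u| + |S i| := abs_add_le _ _
          _ = |γ'' i (σ i z) - u| + S i := by rw [abs_of_nonneg (hSnn i)]
      rw [Finset.sum_sub_distrib] at h1
      have hSdef : S i = ∑ k ∈ T i, (γ'' i (σ i k) - u) := rfl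
      linarith [hSnn i]
    rw [hL γ''', hL γ'']
    have hAC : 0 ≤ α / C := le_of_lt (div_pos hα0 hC)
    have hA1 : 0 ≤ 1 - α := by linarith
    have hsumA : ∑ i, ∑ j, γ''' i j * d i j ≤ ∑ i, ∑ j, γ'' i j * d i j :=
      Finset.sum_le_sum fun i _ => claimA i
    have hsumB : ∑ i, ∑ j, |γ''' i j - u| ≤ ∑ i, ∑ j, |γ'' i j - u| :=
      Finset.sum_le_sum fun i _ => claimB i
    exact add_le_add (mul_le_mul_of_nonneg_left hsumA hAC)
      (mul_le_mul_of_nonneg_left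
        (mul_le_mul_of_nonneg_left hsumB (by norm_num)) hA1)
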